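/- Fix an integer k ≥ 1 and σ,τ ∈ P(k), and set d = |D(σ∨τ)|. If d is odd and d ≠ k, then N^{#(σ∧τ)+(d+1)/2}·W̊g_k(σ,τ,N) converges, as N → ∞, to μ(σ∧τ,σ)·μ(σ∧τ,τ)·(#(σ∧τ) − d/3 − 2/3)·d!!, where (2m−1)!! = ∏_{j=1}^{m}(2j−1) and (−1)!! = 1. -/

import Mathlib

open Finset

noncomputable section

namespace WgPerm

/-- Number of blocks of the partition of `α` corresponding to the setoid `s`. -/
def numBlocks {α : Type*} (s : Setoid α) : ℕ := Nat.card (Quotient s)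

/-- Number of blocks of `s` contained in the block `B` of `t` (meaningful when `s ≤ t`). -/
def lam {α : Type*} (s t : Setoid α) (B : Quotient t) : ℕ :=
  Nat.card {c : Quotient s // Quotient.mk t (Quotient.out c) = B}

/-- Möbius function of the partition lattice:
`μ(s,t) = ∏_B (−1)^{λ_B−1} (λ_B−1)!` over the blocks `B` of `t`. -/
def mobius {α : Type*} (s t : Setoid α) : ℤ :=
  ∏ᶠ B : Quotient t, (-1 : ℤ) ^ (lam s t B - 1) * (Nat.factorial (lam s t B - 1) : ℤ)

/-- Kernel partition `Π_i` of a tuple `i`. -/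
def kerP {k N : ℕ} (i : Fin k → Fin N) : Setoid (Fin k) := Setoid.ker i

/-- `(i,j)` entry of the permutation matrix of `g`. -/
def permEntry {N : ℕ} (g : Equiv.Perm (Fin N)) (i j : Fin N) : ℝ :=
  if g i = j then 1 else 0

/-- The Weingarten function for the symmetric group `S_N`. -/
def Wg (k N : ℕ) (σ τ : Setoid (Fin k)) : ℝ :=
  ∑ᶠ π ∈ {π : Setoid (Fin k) | π ≤ σ ⊓ τ},
    ((mobius π σ * mobius π τ : ℤ) : ℝ) / (Nat.descFactorial N (numBlocks π) : ℝ)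

/-- `|D(π)|`: the number of singleton blocks of `π`. -/
def numSingletons {k : ℕ} (π : Setoid (Fin k)) : ℕ :=
  Nat.card {j : Fin k | ∀ m, π.r j m → m = j}

/-- The centered Weingarten function for the symmetric group `S_N`. -/
def cWg (k N : ℕ) (σ τ : Setoid (Fin k)) : ℝ :=
  ∑ i ∈ Finset.range (numSingletons (σ ⊔ τ) + 1),
    ((numSingletons (σ ⊔ τ)).choose i : ℝ) * (-1 : ℝ) ^ i *
      ∑ᶠ π ∈ {π : Setoid (Fin k) | π ≤ σ ⊓ τ},
        ((mobius π σ * mobius π τ : ℤ) : ℝ) * ((N : ℝ) ^ i)⁻¹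
          / (Nat.descFactorial N (numBlocks π - i) : ℝ)

/-- `a_k(N) = Σ_{l=0}^{k} binom(k,l)·(−N)^{−(k−l)}/(N)_l`. -/
def aSeq (k N : ℕ) : ℝ :=
  ∑ l ∈ Finset.range (k + 1),
    (k.choose l : ℝ) * ((-(N : ℝ)) ^ (k - l))⁻¹ / (Nat.descFactorial N l : ℝ)

/-!
Group the terms of `W̊g_k(σ,τ,N)` by `π ≤ σ ∧ τ`. For `π` with `n` blocks the inner sum over `i`
equals `g(1/N) / (N)_n`, where `g = Σ_i (-1)^i C(d,i) P_i` and `P_i = ∏_{j=1}^{i} (1 - (n-j) X)`.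
Up to sign, `[X^r] g` is the `d`-th forward difference at `0` of `i ↦ [X^r] P_i`, a polynomial of
degree `2r` in `i`; so it vanishes for `2r < d`, and for `d = 2s+1` the recursion
`Δ_i [X^{r+1}] P_i = (i + 1 - n) [X^r] P_i` together with the Leibniz rule for `Δ` gives
`[X^{s+1}] g = (n - (d+2)/3) d!!`. Thus the inner sum is `O(N^{-n-s-1})`, and only `π = σ ∧ τ`,
the unique partition with the fewest blocks, contributes to the leading order.
-/

open Polynomial Filter fwdDiff

section ForwardDifference

variable {R : Type*} [CommRing R]

theorem fwdDiff_iter_succ_natCast_mul (f : ℕ → R) (m x : ℕ) :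
    (Δ_[1])^[m + 1] (fun i : ℕ ↦ (i : R) * f i) x =
      x * (Δ_[1])^[m + 1] f x + (m + 1) * (Δ_[1])^[m] f (x + 1) := by
  induction m generalizing x with
  | zero =>
    simp only [zero_add, Function.iterate_one, Function.iterate_zero_apply, fwdDiff]
    push_cast
    ring
  | succ m ih =>
    rw [Function.iterate_succ_apply', funext ih]
    simp only [fwdDiff, Function.iterate_succ_apply']
    push_cast
    ring

theorem fwdDiff_iter_natCast_mul_apply_zero (f : ℕ → R) (m : ℕ) :
    (Δ_[1])^[m] (fun i : ℕ ↦ (i : R) * f i) 0 = m * ((Δ_[1])^[m - 1] f 0 + (Δ_[1])^[m] f 0) := by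
  cases m with
  | zero => simp
  | succ m =>
    rw [fwdDiff_iter_succ_natCast_mul, Function.iterate_succ_apply' _ m f]
    simp [fwdDiff]

theorem sum_range_neg_one_pow_mul_choose_mul (f : ℕ → R) (d : ℕ) :
    ∑ i ∈ range (d + 1), (-1) ^ i * d.choose i * f i = (-1) ^ d * (Δ_[1])^[d] f 0 := by
  rw [fwdDiff_iter_eq_sum_shift, mul_sum]
  refine sum_congr rfl fun i hi ↦ ?_
  have hi : i ≤ d := Nat.lt_succ_iff.mp (mem_range.mp hi)
  rw [zsmul_eq_mul, zero_add, smul_eq_mul, mul_one]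
  push_cast
  rw [← mul_assoc, ← mul_assoc, ← pow_add, show d + (d - i) = i + 2 * (d - i) by omega, pow_add,
    pow_mul, neg_one_sq, one_pow, mul_one]

end ForwardDifference

/-- `ratioPoly n i` evaluated at `1 / N` is `(N)_n / (N ^ i (N)_{n-i})`. -/
def ratioPoly (α : ℝ) (i : ℕ) : ℝ[X] := ∏ j ∈ range i, (1 - C (α - (j + 1)) * X)

/-- `m!` times the `m`-th coefficient of the Newton series of `i ↦ [X^r] ratioPoly α i`. -/
def newtonCoeff (α : ℝ) (r m : ℕ) : ℝ := (Δ_[1])^[m] (fun i ↦ (ratioPoly α i).coeff r) 0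

section RatioPoly

variable (α : ℝ)

theorem coeff_zero_ratioPoly (i : ℕ) : (ratioPoly α i).coeff 0 = 1 := by
  simp [ratioPoly, coeff_zero_prod]

theorem fwdDiff_coeff_succ_ratioPoly (r : ℕ) :
    Δ_[1] (fun i ↦ (ratioPoly α i).coeff (r + 1)) =
      fun i : ℕ ↦ ((i : ℝ) + (1 - α)) * (ratioPoly α i).coeff r := by
  ext i
  simp only [fwdDiff, ratioPoly, prod_range_succ, mul_sub, mul_one, coeff_sub,
    mul_left_comm _ (C _), coeff_C_mul, coeff_mul_X]
  ring

theorem newtonCoeff_zero_left (m : ℕ) : newtonCoeff α 0 m = if m = 0 then 1 else 0 := by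
  simp only [newtonCoeff, coeff_zero_ratioPoly]
  cases m with
  | zero => simp
  | succ m =>
    rw [Function.iterate_succ_apply, fwdDiff_const,
      Function.iterate_fixed (fwdDiff_const 1 (0 : ℝ))]
    simp

theorem newtonCoeff_succ_succ (r m : ℕ) :
    newtonCoeff α (r + 1) (m + 1) =
      m * newtonCoeff α r (m - 1) + (m + 1 - α) * newtonCoeff α r m := by
  have hsplit : (fun i : ℕ ↦ ((i : ℝ) + (1 - α)) * (ratioPoly α i).coeff r) =
      (fun i : ℕ ↦ (i : ℝ) * (ratioPoly α i).coeff r) +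
        (1 - α) • fun i ↦ (ratioPoly α i).coeff r := by
    ext i
    simp only [Pi.add_apply, Pi.smul_apply, smul_eq_mul]
    ring
  rw [newtonCoeff, Function.iterate_succ_apply, fwdDiff_coeff_succ_ratioPoly, hsplit,
    fwdDiff_iter_add, fwdDiff_iter_const_smul, Pi.add_apply, Pi.smul_apply,
    fwdDiff_iter_natCast_mul_apply_zero, smul_eq_mul]
  simp only [newtonCoeff]
  ring

theorem newtonCoeff_eq_zero_of_lt : ∀ {r m : ℕ}, 2 * r < m → newtonCoeff α r m = 0
  | 0, m, h => by rw [newtonCoeff_zero_left, if_neg (by omega)]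
  | r + 1, m + 1, h => by
    rw [newtonCoeff_succ_succ, newtonCoeff_eq_zero_of_lt (by omega),
      newtonCoeff_eq_zero_of_lt (by omega)]
    ring

theorem newtonCoeff_two_mul_self (r : ℕ) :
    newtonCoeff α r (2 * r) = ∏ j ∈ range r, (2 * (j : ℝ) + 1) := by
  induction r with
  | zero => simp [newtonCoeff_zero_left]
  | succ r ih =>
    rw [show 2 * (r + 1) = 2 * r + 1 + 1 by ring, newtonCoeff_succ_succ, Nat.add_sub_cancel, ih,
      newtonCoeff_eq_zero_of_lt α (by omega), prod_range_succ]
    push_cast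
    ring

theorem newtonCoeff_succ_two_mul_add_one (r : ℕ) :
    newtonCoeff α (r + 1) (2 * r + 1) =
      ((2 * r + 3) / 3 - α) * ∏ j ∈ range (r + 1), (2 * (j : ℝ) + 1) := by
  induction r with
  | zero => simp [newtonCoeff_succ_succ, newtonCoeff_zero_left]
  | succ r ih =>
    rw [show 2 * (r + 1) + 1 = 2 * r + 2 + 1 by ring, newtonCoeff_succ_succ,
      show 2 * r + 2 - 1 = 2 * r + 1 by omega, ih, show 2 * r + 2 = 2 * (r + 1) by ring,
      newtonCoeff_two_mul_self, prod_range_succ _ (r + 1)]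
    push_cast
    ring

end RatioPoly

def altRatioPoly (α : ℝ) (d : ℕ) : ℝ[X] :=
  ∑ i ∈ range (d + 1), ((-1) ^ i * d.choose i : ℝ) • ratioPoly α i

theorem coeff_altRatioPoly (α : ℝ) (d r : ℕ) :
    (altRatioPoly α d).coeff r = (-1) ^ d * newtonCoeff α r d := by
  simp only [altRatioPoly, finsetSum_coeff, coeff_smul, smul_eq_mul, newtonCoeff,
    ← sum_range_neg_one_pow_mul_choose_mul]

theorem cast_descFactorial_add (N m i : ℕ) :
    (N.descFactorial (m + i) : ℝ) =
      N.descFactorial m * ∏ j ∈ range i, ((N : ℝ) - ((m + i : ℕ) - (j + 1))) := by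
  simp only [← descPochhammer_eval_eq_descFactorial, descPochhammer_eval_eq_prod_range,
    prod_range_add]
  congr 1
  rw [← prod_range_reflect]
  refine prod_congr rfl fun j hj ↦ ?_
  rw [Nat.sub_sub, Nat.cast_add, Nat.cast_sub (by simp at hj; omega)]
  push_cast
  ring

theorem eval_ratioPoly_inv (n i N : ℕ) (hN : N ≠ 0) :
    (ratioPoly n i).eval (N : ℝ)⁻¹ =
      (∏ j ∈ range i, ((N : ℝ) - (n - (j + 1)))) / (N : ℝ) ^ i := by
  have hN' : (N : ℝ) ≠ 0 := by exact_mod_cast hN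
  rw [ratioPoly, eval_prod, show (N : ℝ) ^ i = ∏ _j ∈ range i, (N : ℝ) by simp,
    ← prod_div_distrib]
  refine prod_congr rfl fun j _ ↦ ?_
  simp only [eval_sub, eval_one, eval_mul, eval_C, eval_X]
  field_simp

theorem inv_pow_div_descFactorial_sub {n i N : ℕ} (hi : i ≤ n) (hN : n ≤ N) (hN0 : N ≠ 0) :
    ((N : ℝ) ^ i)⁻¹ / N.descFactorial (n - i) =
      (ratioPoly n i).eval (N : ℝ)⁻¹ / N.descFactorial n := by
  obtain ⟨m, rfl⟩ := Nat.exists_eq_add_of_le' hi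
  have hpos : (N.descFactorial (m + i) : ℝ) ≠ 0 := by
    exact_mod_cast (Nat.descFactorial_pos.mpr hN).ne'
  rw [cast_descFactorial_add] at hpos ⊢
  rw [Nat.add_sub_cancel, eval_ratioPoly_inv _ _ _ hN0]
  field_simp
  rw [mul_comm, ← div_div, div_self (right_ne_zero_of_mul hpos)]

theorem tendsto_pow_div_descFactorial {m n : ℕ} (h : m ≤ n) :
    Tendsto (fun N : ℕ ↦ (N : ℝ) ^ m / N.descFactorial n) atTop
      (nhds (if m = n then 1 else 0)) := by
  have hpoly : Tendsto (fun x : ℝ ↦ (X ^ m : ℝ[X]).eval x / (descPochhammer ℝ n).eval x) atTop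
      (nhds (if m = n then 1 else 0)) := by
    split_ifs with hmn
    · subst hmn
      simpa [(monic_descPochhammer ℝ m).leadingCoeff] using
        div_tendsto_atTop_leadingCoeff_div_of_degree_eq (X ^ m : ℝ[X]) (descPochhammer ℝ m)
          (by rw [degree_X_pow, degree_eq_natDegree (monic_descPochhammer ℝ m).ne_zero,
            descPochhammer_natDegree])
    · exact div_tendsto_atTop_zero_of_degree_lt _ _ (by
        rw [degree_X_pow, degree_eq_natDegree (monic_descPochhammer ℝ n).ne_zero,
          descPochhammer_natDegree]; exact_mod_cast lt_of_le_of_ne h hmn)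
  simpa [descPochhammer_eval_eq_descFactorial, Function.comp_def] using
    hpoly.comp tendsto_natCast_atTop_atTop

theorem tendsto_pow_mul_eval_inv (p : ℝ[X]) (m : ℕ) (hp : ∀ r < m, p.coeff r = 0) :
    Tendsto (fun N : ℕ ↦ (N : ℝ) ^ m * p.eval (N : ℝ)⁻¹) atTop (nhds (p.coeff m)) := by
  obtain ⟨q, rfl⟩ := X_pow_dvd_iff.mpr hp
  have hq : Tendsto (fun N : ℕ ↦ q.eval (N : ℝ)⁻¹) atTop (nhds (q.eval 0)) :=
    (q.continuous.tendsto 0).comp tendsto_inv_atTop_nhds_zero_nat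
  rw [coeff_X_pow_mul', if_pos le_rfl, Nat.sub_self, coeff_zero_eq_eval_zero]
  refine hq.congr' ?_
  filter_upwards [eventually_ne_atTop 0] with N hN
  rw [eval_mul, eval_pow, eval_X, ← mul_assoc, ← mul_pow, mul_inv_cancel₀ (by exact_mod_cast hN),
    one_pow, one_mul]

def alternatingDescSum (d n N : ℕ) : ℝ :=
  ∑ i ∈ range (d + 1), (d.choose i : ℝ) * (-1) ^ i * (((N : ℝ) ^ i)⁻¹ / N.descFactorial (n - i))

theorem alternatingDescSum_eq {d n N : ℕ} (hd : d ≤ n) (hN : n ≤ N) (hN0 : N ≠ 0) :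
    alternatingDescSum d n N = (altRatioPoly n d).eval (N : ℝ)⁻¹ / N.descFactorial n := by
  rw [alternatingDescSum, altRatioPoly, eval_finsetSum, sum_div]
  refine sum_congr rfl fun i hi ↦ ?_
  rw [eval_smul, smul_eq_mul, mul_div_assoc, mul_comm (d.choose i : ℝ),
    inv_pow_div_descFactorial_sub (by simp at hi; omega) hN hN0]

theorem tendsto_pow_mul_alternatingDescSum {s m n : ℕ} (hs : 2 * s + 1 ≤ n) (hm : m ≤ n) :
    Tendsto (fun N : ℕ ↦ (N : ℝ) ^ (m + (s + 1)) * alternatingDescSum (2 * s + 1) n N) atTop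
      (nhds ((if m = n then 1 else 0) *
        ((n - (2 * s + 3) / 3) * ∏ j ∈ range (s + 1), (2 * (j : ℝ) + 1)))) := by
  have hcoeff := tendsto_pow_mul_eval_inv (altRatioPoly n (2 * s + 1)) (s + 1) fun r hr ↦ by
    rw [coeff_altRatioPoly, newtonCoeff_eq_zero_of_lt _ (by omega), mul_zero]
  rw [coeff_altRatioPoly, newtonCoeff_succ_two_mul_add_one] at hcoeff
  convert ((tendsto_pow_div_descFactorial hm).mul hcoeff).congr' ?_ using 2
  · rw [pow_succ, pow_mul, neg_one_sq, one_pow]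
    ring
  · filter_upwards [eventually_ge_atTop n, eventually_ne_atTop 0] with N hN hN0
    rw [alternatingDescSum_eq hs hN hN0, pow_add]
    ring

instance {α : Type*} [Finite α] : Finite (Setoid α) :=
  Finite.of_injective (fun s : Setoid α ↦ s.r) fun _ _ h ↦ Setoid.ext fun a b ↦ by simp only [h]

section Partitions

variable {α : Type*} [Finite α] {π ρ : Setoid α}

theorem numBlocks_le_of_le (h : π ≤ ρ) : numBlocks ρ ≤ numBlocks π :=
  Nat.card_le_card_of_surjective _ (Quotient.map_surjective (f := id) (fun _ _ hab ↦ h hab)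
    Function.surjective_id)

theorem numBlocks_lt_of_lt (h : π < ρ) : numBlocks ρ < numBlocks π := by
  have hsurj := Quotient.map_surjective (f := id) (fun _ _ hab ↦ h.le hab) Function.surjective_id
  refine (numBlocks_le_of_le h.le).lt_of_ne fun heq ↦ h.ne (le_antisymm h.le fun a b hab ↦ ?_)
  have hinj := ((Nat.bijective_iff_surjective_and_card _).mpr ⟨hsurj, heq.symm⟩).injective
  exact Quotient.exact (hinj (Quotient.sound hab))

end Partitions

theorem numSingletons_le_numBlocks_of_le {k : ℕ} {π ρ : Setoid (Fin k)} (h : π ≤ ρ) :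
    numSingletons ρ ≤ numBlocks π :=
  Nat.card_le_card_of_injective (fun j ↦ Quotient.mk π j.1) fun a b hab ↦
    Subtype.ext (a.2 b (h (Quotient.exact hab))).symm

theorem cWg_eq_sum (k N : ℕ) (σ τ : Setoid (Fin k)) :
    cWg k N σ τ = ∑ π ∈ (Set.toFinite {π : Setoid (Fin k) | π ≤ σ ⊓ τ}).toFinset,
      ((mobius π σ * mobius π τ : ℤ) : ℝ) *
        alternatingDescSum (numSingletons (σ ⊔ τ)) (numBlocks π) N := by
  simp only [cWg, alternatingDescSum, finsum_mem_eq_finite_toFinset_sum _ (Set.toFinite _),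
    mul_sum]
  rw [sum_comm]
  refine sum_congr rfl fun π _ ↦ sum_congr rfl fun i _ ↦ ?_
  ring

theorem stmt15_general (k : ℕ) (σ τ : Setoid (Fin k))
    (hd_odd : numSingletons (σ ⊔ τ) % 2 = 1) :
    Filter.Tendsto
      (fun N : ℕ =>
        (N : ℝ) ^ (numBlocks (σ ⊓ τ) + (numSingletons (σ ⊔ τ) + 1) / 2) * cWg k N σ τ)
      Filter.atTop
      (nhds (((mobius (σ ⊓ τ) σ * mobius (σ ⊓ τ) τ : ℤ) : ℝ) *
        ((numBlocks (σ ⊓ τ) : ℝ) - (numSingletons (σ ⊔ τ) : ℝ) / 3 - 2 / 3) *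
        ∏ j ∈ Finset.range ((numSingletons (σ ⊔ τ) + 1) / 2), (2 * (j : ℝ) + 1))) := by
  set d := numSingletons (σ ⊔ τ)
  set n₀ := numBlocks (σ ⊓ τ)
  obtain ⟨s, hs⟩ : ∃ s, d = 2 * s + 1 := ⟨d / 2, by omega⟩
  set T := (Set.toFinite {π : Setoid (Fin k) | π ≤ σ ⊓ τ}).toFinset
  have hT : ∀ π, π ∈ T ↔ π ≤ σ ⊓ τ := fun π ↦ by simp [T]
  have hdn : d ≤ n₀ := numSingletons_le_numBlocks_of_le (inf_le_left.trans le_sup_left)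
  have hlim := tendsto_finsetSum T fun π hπ ↦
    have hn₀ : n₀ ≤ numBlocks π := numBlocks_le_of_le ((hT π).mp hπ)
    (tendsto_pow_mul_alternatingDescSum (hs ▸ hdn.trans hn₀) hn₀).const_mul
      ((mobius π σ * mobius π τ : ℤ) : ℝ)
  rw [sum_eq_single_of_mem (σ ⊓ τ) ((hT _).mpr le_rfl) fun π hπ hne ↦ by
    rw [if_neg (numBlocks_lt_of_lt (lt_of_le_of_ne ((hT π).mp hπ) hne)).ne, zero_mul, mul_zero]]
    at hlim
  convert hlim using 2 with N
  · rw [cWg_eq_sum, ← hs, mul_sum, show (d + 1) / 2 = s + 1 by omega]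
    refine sum_congr rfl fun π _ ↦ ?_
    ring
  · rw [if_pos rfl, show (d + 1) / 2 = s + 1 by omega, hs]
    push_cast
    ring

/-- leading asymptotics of `W̊g_k(σ,τ,N)` when `d = |D(σ∨τ)|` is odd, `d ≠ k`. -/
theorem stmt15 (k : ℕ) (hk : 1 ≤ k) (σ τ : Setoid (Fin k))
    (hd_odd : numSingletons (σ ⊔ τ) % 2 = 1) (hd_ne : numSingletons (σ ⊔ τ) ≠ k) :
    Filter.Tendsto
      (fun N : ℕ =>
        (N : ℝ) ^ (numBlocks (σ ⊓ τ) + (numSingletons (σ ⊔ τ) + 1) / 2) * cWg k N σ τ)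
      Filter.atTop
      (nhds (((mobius (σ ⊓ τ) σ * mobius (σ ⊓ τ) τ : ℤ) : ℝ) *
        ((numBlocks (σ ⊓ τ) : ℝ) - (numSingletons (σ ⊔ τ) : ℝ) / 3 - 2 / 3) *
        ∏ j ∈ Finset.range ((numSingletons (σ ⊔ τ) + 1) / 2), (2 * (j : ℝ) + 1))) :=
  stmt15_general k σ τ hd_odd

end WgPerm

end
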